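/- Fix α > 0 and ρ ∈ (−1,1), and parameters s > 0, c ∈ [0,1), ω ≥ 0, ζ ≥ 0, η ≥ 0; set a = s(1−c) + ω², H = η²/(s(1−c)), W = ω²/(s(1−c)). For each integer k ≥ 1 with 1/k < α set ν = 1/k, S₀ = 2α/(a(α + ν + |α − ν|)), γ₀ = a²νS₀²/α, I⁰ = s(1−c)(1 − 2s(1−c)νS₀ + a s(1−c) ν S₀²), I¹ = (s(1−c)(1−ν) + ω²)/ν, and E_k = (1/k)·((1−ρ²)I⁰ + ρ²I¹ + γ₀ζ² + η²)/(1 − γ₀) + ((k−1)/k)·((1−ρ²)s(1−c)(1 − 2s(1−c)νS₀) − ρ²s(1−c)). Then as k → ∞: (i) E_k → E_∞ := s(1−c)·(1 − ρ² + ρ²W), and (ii) k·(E_k − E_∞) → s(1−c)·((1+W)²ρ² + α(H + HW − 2 + 2ρ²))/((1+W)·α). -/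

import Mathlib

/-!
On the branch `1/k < α` the term `|α − ν|` in `S₀` resolves to `α − ν`, so `S₀ = 1/a` and
`γ₀ = ν/α`, and `E_k = F(1/k)` for a rational function `F` that is smooth at `ν = 0`. Hence
`E_k → F(0) = E_∞`, and `k (E_k − E_∞) = (F(1/k) − F(0)) / (1/k) → F'(0)`, which is the stated
constant.
-/

/-- Ridgeless generalization error of a homogeneous ensemble of `k` linear regressors on
equicorrelated data, each subsampling a mutually exclusive fraction `ν = 1/k` of the
features (total number of weights conserved). -/
noncomputable def homEnsErr (k : ℕ) (α ρ s c ω ζ η : ℝ) : ℝ :=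
  let ν : ℝ := 1 / (k : ℝ)
  let a : ℝ := s * (1 - c) + ω ^ 2
  let S0 : ℝ := 2 * α / (a * (α + ν + |α - ν|))
  let γ0 : ℝ := a ^ 2 * ν * S0 ^ 2 / α
  let I0 : ℝ := s * (1 - c) * (1 - 2 * s * (1 - c) * ν * S0 + a * s * (1 - c) * ν * S0 ^ 2)
  let I1 : ℝ := (s * (1 - c) * (1 - ν) + ω ^ 2) / ν
  (1 / (k : ℝ)) * (((1 - ρ ^ 2) * I0 + ρ ^ 2 * I1 + γ0 * ζ ^ 2 + η ^ 2) / (1 - γ0)) +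
    (((k : ℝ) - 1) / (k : ℝ)) *
      ((1 - ρ ^ 2) * s * (1 - c) * (1 - 2 * s * (1 - c) * ν * S0) - ρ ^ 2 * s * (1 - c))

open Filter Topology

theorem HasDerivAt.tendsto_natCast_mul_sub {F : ℝ → ℝ} {D : ℝ} (hF : HasDerivAt F D 0) :
    Tendsto (fun k : ℕ => (k : ℝ) * (F (k : ℝ)⁻¹ - F 0)) atTop (𝓝 D) := by
  simpa [Function.comp_def] using hF.tendsto_slope_zero_right.comp
    (tendsto_inv_atTop_nhdsGT_zero.comp tendsto_natCast_atTop_atTop)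

theorem hasDerivAt_quadratic_zero (p₀ p₁ p₂ : ℝ) :
    HasDerivAt (fun ν : ℝ => p₀ + p₁ * ν + p₂ * ν ^ 2) p₁ 0 := by
  simpa using ((hasDerivAt_id' 0).const_mul p₁).const_add p₀ |>.fun_add
    (((hasDerivAt_id' 0).fun_pow 2).const_mul p₂)

theorem hasDerivAt_div_sub_zero {α : ℝ} (hα : α ≠ 0) :
    HasDerivAt (fun ν : ℝ => α / (α - ν)) α⁻¹ 0 := by
  refine ((hasDerivAt_const (0 : ℝ) α).fun_div ((hasDerivAt_id' 0).const_sub α)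
    (by simpa using hα)).congr_deriv ?_
  field_simp
  ring

/-- `homEnsErr` as a function of `ν = 1/k` on the branch `ν < α`, written with `b = s(1−c)`,
`a = b + ω²`, `S₀ = 1/a`, `γ₀ = ν/α` and `ν I¹ = a − bν`. -/
noncomputable def homEnsErrOfFrac (α ρ b ω ζ η ν : ℝ) : ℝ :=
  α / (α - ν) * ((1 - ρ ^ 2) * b * ν * (1 - b * ν / (b + ω ^ 2)) + ρ ^ 2 * (b + ω ^ 2 - b * ν)
      + ν ^ 2 * ζ ^ 2 / α + ν * η ^ 2)
    + (1 - ν) * ((1 - ρ ^ 2) * b * (1 - 2 * b * ν / (b + ω ^ 2)) - ρ ^ 2 * b)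

theorem homEnsErr_eq_homEnsErrOfFrac {k : ℕ} {α ρ s c ω ζ η : ℝ} (hk : k ≠ 0)
    (hkα : 1 / (k : ℝ) < α) (ha : s * (1 - c) + ω ^ 2 ≠ 0) :
    homEnsErr k α ρ s c ω ζ η = homEnsErrOfFrac α ρ (s * (1 - c)) ω ζ η (1 / k) := by
  have hk' : (k : ℝ) ≠ 0 := Nat.cast_ne_zero.mpr hk
  have hα : α ≠ 0 := (lt_trans (by positivity) hkα).ne'
  have hS₀ : 2 * α / ((s * (1 - c) + ω ^ 2) * (α + 1 / k + |α - 1 / k|))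
      = 1 / (s * (1 - c) + ω ^ 2) := by
    rw [abs_of_pos (sub_pos.mpr hkα), show α + 1 / (k : ℝ) + (α - 1 / k) = 2 * α by ring]
    field_simp
  have hαν : α - 1 / (k : ℝ) ≠ 0 := (sub_pos.mpr hkα).ne'
  simp only [homEnsErr, homEnsErrOfFrac, hS₀]
  field_simp
  ring

theorem hasDerivAt_homEnsErrOfFrac (α ρ b ω ζ η : ℝ) (hα : α ≠ 0) :
    HasDerivAt (homEnsErrOfFrac α ρ b ω ζ η)
      (ρ ^ 2 * (b + ω ^ 2) / α + η ^ 2 - 2 * (1 - ρ ^ 2) * b ^ 2 / (b + ω ^ 2)) 0 := by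
  -- the factor after `α / (α - ν)` and the `(1 - ν)`-term, expanded in powers of `ν`
  have hP := hasDerivAt_quadratic_zero (ρ ^ 2 * (b + ω ^ 2)) ((1 - ρ ^ 2) * b - ρ ^ 2 * b + η ^ 2)
    (ζ ^ 2 / α - (1 - ρ ^ 2) * b ^ 2 / (b + ω ^ 2))
  have hQ := hasDerivAt_quadratic_zero ((1 - ρ ^ 2) * b - ρ ^ 2 * b)
    (-((1 - ρ ^ 2) * b - ρ ^ 2 * b) - 2 * (1 - ρ ^ 2) * b ^ 2 / (b + ω ^ 2))
    (2 * (1 - ρ ^ 2) * b ^ 2 / (b + ω ^ 2))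
  refine ((((hasDerivAt_div_sub_zero hα).fun_mul hP).fun_add hQ).congr_deriv ?_)
    |>.congr_of_eventuallyEq (.of_eq (funext fun ν => ?_))
  · simp only [sub_zero, div_self hα]
    ring
  · unfold homEnsErrOfFrac
    ring

theorem stmt_18_general (α ρ s c ω ζ η : ℝ) (hα : 0 < α)
    (hs : 0 < s) (hc : c ∈ Set.Ico (0 : ℝ) 1) :
    let H := η ^ 2 / (s * (1 - c))
    let W := ω ^ 2 / (s * (1 - c))
    let Einf := s * (1 - c) * (1 - ρ ^ 2 + ρ ^ 2 * W)
    Filter.Tendsto (fun k : ℕ => homEnsErr k α ρ s c ω ζ η) Filter.atTop (nhds Einf) ∧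
    Filter.Tendsto (fun k : ℕ => (k : ℝ) * (homEnsErr k α ρ s c ω ζ η - Einf))
      Filter.atTop
      (nhds (s * (1 - c) *
        ((1 + W) ^ 2 * ρ ^ 2 + α * (H + H * W - 2 + 2 * ρ ^ 2)) / ((1 + W) * α))) := by
  intro H W Einf
  have hb : 0 < s * (1 - c) := mul_pos hs (sub_pos.mpr hc.2)
  have ha : 0 < s * (1 - c) + ω ^ 2 := by positivity
  have hinv : Tendsto (fun k : ℕ => (k : ℝ)⁻¹) atTop (𝓝 0) :=
    tendsto_inv_atTop_zero.comp tendsto_natCast_atTop_atTop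
  have hF := hasDerivAt_homEnsErrOfFrac α ρ (s * (1 - c)) ω ζ η hα.ne'
  have hF₀ : homEnsErrOfFrac α ρ (s * (1 - c)) ω ζ η 0 = Einf := by
    simp only [homEnsErrOfFrac, Einf, W, sub_zero, div_self hα.ne']
    generalize s * (1 - c) = b at hb ha ⊢
    field_simp
    ring
  have hD : ρ ^ 2 * (s * (1 - c) + ω ^ 2) / α + η ^ 2
      - 2 * (1 - ρ ^ 2) * (s * (1 - c)) ^ 2 / (s * (1 - c) + ω ^ 2)
      = s * (1 - c) * ((1 + W) ^ 2 * ρ ^ 2 + α * (H + H * W - 2 + 2 * ρ ^ 2)) / ((1 + W) * α) := by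
    simp only [H, W]
    generalize s * (1 - c) = b at hb ha ⊢
    field_simp
    ring
  have hEq : ∀ᶠ k : ℕ in atTop,
      homEnsErrOfFrac α ρ (s * (1 - c)) ω ζ η (k : ℝ)⁻¹ = homEnsErr k α ρ s c ω ζ η := by
    filter_upwards [hinv.eventually_lt_const hα, eventually_ne_atTop 0] with k hkα hk
    rw [← one_div, homEnsErr_eq_homEnsErrOfFrac hk (by simpa using hkα) ha.ne']
  rw [← hF₀, ← hD]
  exact ⟨(hF.continuousAt.tendsto.comp hinv).congr' hEq,
    hF.tendsto_natCast_mul_sub.congr' (hEq.mono fun k hk => by rw [hk])⟩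

/-- Large-ensemble asymptotics of the ridgeless homogeneous-ensemble error: as `k → ∞`,
`E_k → E_∞ = s(1−c)(1 − ρ² + ρ²W)` and
`k(E_k − E_∞) → s(1−c)((1+W)²ρ² + α(H + HW − 2 + 2ρ²))/((1+W)α)`,
with `H = η²/(s(1−c))` and `W = ω²/(s(1−c))`. -/
theorem stmt_18 (α ρ s c ω ζ η : ℝ) (hα : 0 < α) (hρ : ρ ∈ Set.Ioo (-1 : ℝ) 1)
    (hs : 0 < s) (hc : c ∈ Set.Ico (0 : ℝ) 1) (hω : 0 ≤ ω) (hζ : 0 ≤ ζ) (hη : 0 ≤ η) :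
    let H := η ^ 2 / (s * (1 - c))
    let W := ω ^ 2 / (s * (1 - c))
    let Einf := s * (1 - c) * (1 - ρ ^ 2 + ρ ^ 2 * W)
    Filter.Tendsto (fun k : ℕ => homEnsErr k α ρ s c ω ζ η) Filter.atTop (nhds Einf) ∧
    Filter.Tendsto (fun k : ℕ => (k : ℝ) * (homEnsErr k α ρ s c ω ζ η - Einf))
      Filter.atTop
      (nhds (s * (1 - c) *
        ((1 + W) ^ 2 * ρ ^ 2 + α * (H + H * W - 2 + 2 * ρ ^ 2)) / ((1 + W) * α))) :=
  stmt_18_general α ρ s c ω ζ η hα hs hc
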